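/- arXiv:2208.03810 — 2 statements merged into one kernel-verified Lean document; each statement's English description precedes it below -/
import Mathlib

section
/- Fix ε ∈ (0, 1/2] and an integer d ≥ 1. If each edge of the complete rooted binary tree of depth d is independently set to 1 with probability (1+ε)/2, then the probability that at least one leaf is alive (i.e., some root-to-leaf path has all its edges equal to 1) is at least ε. -/
/-!
The number `Z_d` of alive leaves is a Galton–Watson process with offspring law `Bin(2, p)`,
`p = (1 + ε) / 2`. Peeling off the bottom level of edges (the last `2 ^ (d + 1)` variables in the
heap numbering) gives `E[s ^ Z_(d+1)] = E[f(s) ^ Z_d]` with `f(s) = (1 - p + p s) ^ 2`, hence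
`E[s ^ Z_d] = f^[d](s)` and `P(Z_d > 0) = 1 - f^[d](0)`. Finally `f` maps `[0, 1 - ε]` into
itself, because `f(1 - ε) = (1 - p ε) ^ 2 ≤ 1 - ε`.
-/

open Finset

/-- The set of tested indices `T` determines `f` on input `x`:
every input agreeing with `x` on `T` gives the same function value. -/
def Determines (n : ℕ) (f : (Fin n → Bool) → Bool) (T : Finset (Fin n))
    (x : Fin n → Bool) : Prop :=
  ∀ x' : Fin n → Bool, (∀ i ∈ T, x' i = x i) → f x' = f x

/-- The set of indices tested by the non-adaptive strategy `π` in its first `k` tests. -/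
def prefixSet (n : ℕ) (π : Equiv.Perm (Fin n)) (k : ℕ) : Finset (Fin n) :=
  Finset.univ.filter (fun i => (π.symm i).val < k)

/-- The number of tests performed by the non-adaptive strategy `π` on input `x`:
the least `k` such that the first `k` tested indices determine `f` on `x`. -/
noncomputable def naSteps (n : ℕ) (f : (Fin n → Bool) → Bool)
    (π : Equiv.Perm (Fin n)) (x : Fin n → Bool) : ℕ :=
  sInf {k : ℕ | Determines n f (prefixSet n π k) x}

/-- The cost incurred by the non-adaptive strategy `π` on input `x`, with cost vector `c`. -/
noncomputable def naCost (n : ℕ) (f : (Fin n → Bool) → Bool) (c : Fin n → ℝ)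
    (π : Equiv.Perm (Fin n)) (x : Fin n → Bool) : ℝ :=
  ∑ i ∈ prefixSet n π (naSteps n f π x), c i

/-- Probability of the outcome `x` under the product distribution with parameters `p`. -/
def prodWeight (n : ℕ) (p : Fin n → ℝ) (x : Fin n → Bool) : ℝ :=
  ∏ i : Fin n, if x i then p i else 1 - p i

/-- Expected cost of the non-adaptive strategy `π`. -/
noncomputable def naExpCost (n : ℕ) (f : (Fin n → Bool) → Bool) (c : Fin n → ℝ)
    (p : Fin n → ℝ) (π : Equiv.Perm (Fin n)) : ℝ :=
  ∑ x : Fin n → Bool, prodWeight n p x * naCost n f c π x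

/-- Optimal expected cost among non-adaptive strategies. -/
noncomputable def OPTN (n : ℕ) (f : (Fin n → Bool) → Bool) (c : Fin n → ℝ)
    (p : Fin n → ℝ) : ℝ :=
  sInf { r : ℝ | ∃ π : Equiv.Perm (Fin n), r = naExpCost n f c p π }

/-- Binary decision trees over `n` variables (adaptive strategies). -/
inductive DecTree (n : ℕ) : Type
  | leaf : Bool → DecTree n
  | node : Fin n → DecTree n → DecTree n → DecTree n

/-- Evaluation of a decision tree on an input. -/
def DecTree.eval {n : ℕ} : DecTree n → (Fin n → Bool) → Bool
  | .leaf b, _ => b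
  | .node i t0 t1, x => if x i then DecTree.eval t1 x else DecTree.eval t0 x

/-- Cost of a decision tree on input `x`: the sum of the costs of the indices
labeling the internal nodes on the root-to-leaf path followed on `x`. -/
def DecTree.costOn {n : ℕ} (c : Fin n → ℝ) : DecTree n → (Fin n → Bool) → ℝ
  | .leaf _, _ => 0
  | .node i t0 t1, x =>
      c i + (if x i then DecTree.costOn c t1 x else DecTree.costOn c t0 x)

/-- The decision tree `t` computes the function `f`. -/
def DecTree.Computes {n : ℕ} (t : DecTree n) (f : (Fin n → Bool) → Bool) : Prop :=
  ∀ x, t.eval x = f x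

/-- Expected cost of an adaptive strategy (decision tree). -/
noncomputable def adExpCost (n : ℕ) (c : Fin n → ℝ) (p : Fin n → ℝ)
    (t : DecTree n) : ℝ :=
  ∑ x : Fin n → Bool, prodWeight n p x * DecTree.costOn c t x

/-- Optimal expected cost among adaptive strategies computing `f`. -/
noncomputable def OPTA (n : ℕ) (f : (Fin n → Bool) → Bool) (c : Fin n → ℝ)
    (p : Fin n → ℝ) : ℝ :=
  sInf { r : ℝ | ∃ t : DecTree n, DecTree.Computes t f ∧ r = adExpCost n c p t }

/-- `f` is the monotone read-once DNF whose terms are the (nonempty, pairwise disjoint)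
sets of variables `T 0, …, T (m-1)`. -/
def IsReadOnceDNF (n m : ℕ) (T : Fin m → Finset (Fin n))
    (f : (Fin n → Bool) → Bool) : Prop :=
  (∀ j, (T j).Nonempty) ∧
  (∀ j k, j ≠ k → Disjoint (T j) (T k)) ∧
  (∀ x, f x = true ↔ ∃ j, ∀ i ∈ T j, x i = true)

/-- Nodes of the complete rooted binary tree of depth `d` are numbered `1, …, 2^(d+1)-1`,
with root `1` and the children of `v` being `2v` and `2v+1`; the edge joining a non-root
node `v` to its parent `v/2` is identified with the variable index `v - 2 ∈ Fin (2^(d+1)-2)`.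
`edgeVal d x v` is the value of the edge above node `v`. -/
def edgeVal (d : ℕ) (x : Fin (2 ^ (d + 1) - 2) → Bool) (v : ℕ) : Bool :=
  if h : v - 2 < 2 ^ (d + 1) - 2 then x ⟨v - 2, h⟩ else false

/-- The leaf at node `v` (where `2^d ≤ v < 2^(d+1)`) is alive: every edge on the path
from the root to `v` has value `1`. -/
def leafAlive (d : ℕ) (x : Fin (2 ^ (d + 1) - 2) → Bool) (v : ℕ) : Bool :=
  decide (∀ j ∈ Finset.range d, edgeVal d x (v / 2 ^ j) = true)

/-- The tree-connectivity function of the complete rooted binary tree of depth `d`: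
true iff at least one leaf is alive. -/
def treeConn (d : ℕ) (x : Fin (2 ^ (d + 1) - 2) → Bool) : Bool :=
  decide (∃ v ∈ Finset.Ico ((2 : ℕ) ^ d) ((2 : ℕ) ^ (d + 1)), leafAlive d x v = true)

open Set

theorem sum_prodWeight_mul_prod {n : ℕ} (p : Fin n → ℝ) (g : Fin n → Bool → ℝ) :
    ∑ x, prodWeight n p x * ∏ i, g i (x i) = ∏ i, (p i * g i true + (1 - p i) * g i false) :=
  calc ∑ x, prodWeight n p x * ∏ i, g i (x i)
      = ∑ x : Fin n → Bool, ∏ i, (if x i then p i else 1 - p i) * g i (x i) := by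
        simp only [prodWeight, prod_mul_distrib]
    _ = ∏ i, ∑ b : Bool, (if b then p i else 1 - p i) * g i b :=
        (Fintype.prod_sum fun i b => (if b then p i else 1 - p i) * g i b).symm
    _ = _ := by simp only [Fintype.sum_bool, if_true, Bool.false_eq_true, if_false]

theorem sum_prodWeight {n : ℕ} (p : Fin n → ℝ) : ∑ x, prodWeight n p x = 1 := by
  simpa using sum_prodWeight_mul_prod p fun _ _ => 1

theorem prodWeight_append {m n : ℕ} (p : Fin (m + n) → ℝ) (a : Fin m → Bool)
    (b : Fin n → Bool) :
    prodWeight (m + n) p (Fin.append a b) =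
      prodWeight m (fun i => p (Fin.castAdd n i)) a *
        prodWeight n (fun i => p (Fin.natAdd m i)) b := by
  simp only [prodWeight, Fin.prod_univ_add, Fin.append_left, Fin.append_right]

theorem sum_prodWeight_mul_eq_sum_append {m n N : ℕ} (h : m + n = N) (p : ℝ)
    (F : (Fin N → Bool) → ℝ) :
    ∑ x, prodWeight N (fun _ => p) x * F x =
      ∑ a : Fin m → Bool, ∑ b : Fin n → Bool,
        prodWeight m (fun _ => p) a * prodWeight n (fun _ => p) b *
          F (fun i => Fin.append a b (i.cast h.symm)) := by
  subst h
  rw [← Fintype.sum_prod_type']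
  refine (Fintype.sum_equiv (Fin.appendEquiv m n) _ _ fun ab => ?_).symm
  rw [show Fin.appendEquiv m n ab = Fin.append ab.1 ab.2 from rfl, prodWeight_append]
  rfl

theorem prod_range_two_mul_div_two {M : Type*} [CommMonoid M] (f : ℕ → M) (n : ℕ) :
    ∏ i ∈ range (2 * n), f (i / 2) = ∏ i ∈ range n, f i ^ 2 := by
  induction n with
  | zero => simp
  | succ n ih =>
    rw [show 2 * (n + 1) = 2 * n + 1 + 1 by ring, prod_range_succ, prod_range_succ, ih,
      prod_range_succ, show (2 * n + 1) / 2 = n by omega, show 2 * n / 2 = n by omega,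
      mul_assoc, ← sq]

theorem two_le_div_two_pow {d m u : ℕ} (hm : m < d) (hu : 2 ^ d ≤ u) : 2 ≤ u / 2 ^ m := by
  rw [Nat.le_div_iff_mul_le (by positivity), ← pow_succ']
  exact (Nat.pow_le_pow_right two_pos hm).trans hu

theorem card_edges_succ (d : ℕ) : (2 ^ (d + 1) - 2) + 2 ^ (d + 1) = 2 ^ (d + 1 + 1) - 2 := by
  have := Nat.one_le_two_pow (n := d)
  rw [pow_succ _ (d + 1), pow_succ]
  omega

/-- The edge labelling of the tree of depth `d + 1` whose restriction to the tree of depth `d`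
is `t` and whose bottom edges carry the labels `e`. -/
def growEdges (d : ℕ) (t : Fin (2 ^ (d + 1) - 2) → Bool) (e : Fin (2 ^ (d + 1)) → Bool) :
    Fin (2 ^ (d + 1 + 1) - 2) → Bool :=
  fun i => Fin.append t e (i.cast (card_edges_succ d).symm)

theorem sum_prodWeight_mul_eq_sum_growEdges (d : ℕ) (p : ℝ)
    (F : (Fin (2 ^ (d + 1 + 1) - 2) → Bool) → ℝ) :
    ∑ x, prodWeight _ (fun _ => p) x * F x =
      ∑ t, ∑ e, prodWeight _ (fun _ => p) t * prodWeight _ (fun _ => p) e * F (growEdges d t e) :=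
  sum_prodWeight_mul_eq_sum_append (card_edges_succ d) p F

section growEdges

variable {d : ℕ} (t : Fin (2 ^ (d + 1) - 2) → Bool) (e : Fin (2 ^ (d + 1)) → Bool)

theorem edgeVal_growEdges_of_lt {w : ℕ} (hw : 2 ≤ w) (hw' : w < 2 ^ (d + 1)) :
    edgeVal (d + 1) (growEdges d t e) w = edgeVal d t w := by
  have h₁ : w - 2 < 2 ^ (d + 1) - 2 := by omega
  have h₂ : w - 2 < 2 ^ (d + 1 + 1) - 2 := by rw [← card_edges_succ]; omega
  rw [edgeVal, edgeVal, dif_pos h₁, dif_pos h₂, growEdges,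
    show Fin.cast _ ⟨w - 2, h₂⟩ = Fin.castAdd (2 ^ (d + 1)) ⟨w - 2, h₁⟩ from rfl,
    Fin.append_left]

theorem edgeVal_growEdges_leaf (i : Fin (2 ^ (d + 1))) :
    edgeVal (d + 1) (growEdges d t e) (2 ^ (d + 1) + i) = e i := by
  have h₁ : 2 ^ (d + 1) + (i : ℕ) - 2 = (2 ^ (d + 1) - 2) + i := by
    have := Nat.one_le_two_pow (n := d); have := pow_succ 2 d; omega
  have h₂ : 2 ^ (d + 1) + (i : ℕ) - 2 < 2 ^ (d + 1 + 1) - 2 := by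
    rw [← card_edges_succ]; omega
  rw [edgeVal, dif_pos h₂, growEdges,
    show Fin.cast _ ⟨_, h₂⟩ = Fin.natAdd (2 ^ (d + 1) - 2) i from Fin.ext h₁,
    Fin.append_right]

theorem leafAlive_growEdges (i : Fin (2 ^ (d + 1))) :
    leafAlive (d + 1) (growEdges d t e) (2 ^ (d + 1) + i) =
      (leafAlive d t (2 ^ d + (i : ℕ) / 2) && e i) := by
  have hparent : (2 ^ (d + 1) + (i : ℕ)) / 2 = 2 ^ d + (i : ℕ) / 2 := by
    have := pow_succ 2 d; omega
  have hpath : ∀ m < d, edgeVal (d + 1) (growEdges d t e) ((2 ^ (d + 1) + i) / 2 ^ (m + 1)) =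
      edgeVal d t ((2 ^ d + (i : ℕ) / 2) / 2 ^ m) := by
    intro m hm
    rw [pow_succ' 2 m, ← Nat.div_div_eq_div_mul, hparent]
    have := pow_succ 2 d
    refine edgeVal_growEdges_of_lt t e (two_le_div_two_pow hm (by omega)) ?_
    exact (Nat.div_le_self _ _).trans_lt (by omega)
  simp only [leafAlive, Finset.mem_range, Nat.forall_lt_succ_left, pow_zero, Nat.div_one,
    edgeVal_growEdges_leaf]
  simp +contextual [hpath, Bool.and_comm]

end growEdges

/-- `E[s ^ Z_d]` under the product weights of parameter `p`, where `Z_d` is the number of alive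
leaves. -/
noncomputable def aliveLeavesPGF (p s : ℝ) (d : ℕ) : ℝ :=
  ∑ x, prodWeight (2 ^ (d + 1) - 2) (fun _ => p) x *
    ∏ i : Fin (2 ^ d), if leafAlive d x (2 ^ d + i) then s else 1

theorem aliveLeavesPGF_zero (p s : ℝ) : aliveLeavesPGF p s 0 = s := by
  simp [aliveLeavesPGF, prodWeight, leafAlive]

theorem aliveLeavesPGF_succ (p s : ℝ) (d : ℕ) :
    aliveLeavesPGF p s (d + 1) = aliveLeavesPGF p ((1 - p + p * s) ^ 2) d := by
  rw [aliveLeavesPGF, sum_prodWeight_mul_eq_sum_growEdges, aliveLeavesPGF]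
  refine sum_congr rfl fun t _ => ?_
  simp only [mul_assoc, ← mul_sum]
  congr 1
  let c : ℕ → ℝ := fun u => if leafAlive d t (2 ^ d + u) then 1 - p + p * s else 1
  calc _ = ∑ e, prodWeight _ (fun _ => p) e * ∏ i : Fin (2 ^ (d + 1)),
          (if (leafAlive d t (2 ^ d + (i : ℕ) / 2) && e i) then s else 1) := by
        simp only [leafAlive_growEdges]
    _ = ∏ i : Fin (2 ^ (d + 1)), c (i / 2) := by
        rw [sum_prodWeight_mul_prod (fun _ => p)
          fun i b => if (leafAlive d t (2 ^ d + (i : ℕ) / 2) && b) then s else 1]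
        refine prod_congr rfl fun i _ => ?_
        by_cases h : leafAlive d t (2 ^ d + (i : ℕ) / 2) <;> simp [c, h]
        ring
    _ = ∏ u : Fin (2 ^ d), c u ^ 2 := by
        rw [Fin.prod_univ_eq_prod_range (fun i => c (i / 2)), pow_succ',
          prod_range_two_mul_div_two, Fin.prod_univ_eq_prod_range (fun i => c i ^ 2)]
    _ = _ := by simp [c, ite_pow]

theorem aliveLeavesPGF_eq_iterate (p s : ℝ) (d : ℕ) :
    aliveLeavesPGF p s d = (fun s => (1 - p + p * s) ^ 2)^[d] s := by
  induction d generalizing s with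
  | zero => exact aliveLeavesPGF_zero p s
  | succ d ih => rw [aliveLeavesPGF_succ, ih, Function.iterate_succ_apply]

theorem treeConn_iff (d : ℕ) (x : Fin (2 ^ (d + 1) - 2) → Bool) :
    treeConn d x = true ↔ ∃ i : Fin (2 ^ d), leafAlive d x (2 ^ d + i) = true := by
  have := pow_succ 2 d
  simp only [treeConn, decide_eq_true_eq, Finset.mem_Ico]
  constructor
  · rintro ⟨v, ⟨hv₁, hv₂⟩, hv⟩
    exact ⟨⟨v - 2 ^ d, by omega⟩, by rwa [Nat.add_sub_cancel' hv₁]⟩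
  · rintro ⟨i, hi⟩
    exact ⟨2 ^ d + i, ⟨by omega, by omega⟩, hi⟩

theorem sum_prodWeight_treeConn (p : ℝ) (d : ℕ) :
    ∑ x, prodWeight (2 ^ (d + 1) - 2) (fun _ => p) x * (if treeConn d x then 1 else 0) =
      1 - aliveLeavesPGF p 0 d := by
  have hind : ∀ x, (if treeConn d x then (1 : ℝ) else 0) =
      1 - ∏ i : Fin (2 ^ d), if leafAlive d x (2 ^ d + i) then 0 else 1 := by
    intro x
    by_cases h : treeConn d x
    · obtain ⟨i, hi⟩ := (treeConn_iff d x).1 h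
      rw [if_pos h, prod_eq_zero (mem_univ i) (by simp [hi]), sub_zero]
    · have hdead : ∀ i : Fin (2 ^ d), leafAlive d x (2 ^ d + i) = false := by
        simpa [treeConn_iff] using h
      simp [h, hdead]
  simp only [hind, mul_sub, mul_one, sum_sub_distrib, sum_prodWeight, aliveLeavesPGF]

theorem mapsTo_offspringPGF {ε : ℝ} (hε₀ : 0 ≤ ε) (hε₁ : ε ≤ 1) :
    MapsTo (fun s => (1 - (1 + ε) / 2 + (1 + ε) / 2 * s) ^ 2)
      (Icc 0 (1 - ε)) (Icc 0 (1 - ε)) := by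
  rintro s ⟨hs₀, hs₁⟩
  refine ⟨sq_nonneg _, ?_⟩
  have hlow : 0 ≤ 1 - (1 + ε) / 2 + (1 + ε) / 2 * s := by nlinarith
  calc (1 - (1 + ε) / 2 + (1 + ε) / 2 * s) ^ 2 ≤ (1 - (1 + ε) / 2 * ε) ^ 2 :=
        pow_le_pow_left₀ hlow (by nlinarith) 2
    _ = 1 - ε - ε ^ 2 * (ε + 3) * (1 - ε) / 4 := by ring
    _ ≤ 1 - ε := by
        have : 0 ≤ ε + 3 := by linarith
        have : 0 ≤ 1 - ε := by linarith
        have : 0 ≤ ε ^ 2 * (ε + 3) * (1 - ε) / 4 := by positivity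
        linarith

theorem stmt10_general (ε : ℝ) (hε0 : 0 < ε) (hε1 : ε ≤ 1/2) (d : ℕ) :
    ε ≤ ∑ x : Fin (2 ^ (d + 1) - 2) → Bool,
          prodWeight (2 ^ (d + 1) - 2) (fun _ => (1 + ε) / 2) x *
            (if treeConn d x then 1 else 0) := by
  have h := (mapsTo_offspringPGF hε0.le (by linarith)).iterate d
    (show (0 : ℝ) ∈ Icc 0 (1 - ε) from ⟨le_rfl, by linarith⟩)
  rw [sum_prodWeight_treeConn, aliveLeavesPGF_eq_iterate]
  linarith [h.2]

/-- Fix `ε ∈ (0, 1/2]` and an integer `d ≥ 1`. If each edge of the complete rooted binary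
tree of depth `d` is independently set to `1` with probability `(1+ε)/2`, then the
probability that at least one leaf is alive is at least `ε`. -/
theorem stmt10 (ε : ℝ) (hε0 : 0 < ε) (hε1 : ε ≤ 1/2) (d : ℕ) (hd : 1 ≤ d) :
    ε ≤ ∑ x : Fin (2 ^ (d + 1) - 2) → Bool,
          prodWeight (2 ^ (d + 1) - 2) (fun _ => (1 + ε) / 2) x *
            (if treeConn d x then 1 else 0) :=
  stmt10_general ε hε0 hε1 d
end

section
/- There is a constant c > 0 such that for every integer d ≥ 2, letting n = 2^d + d and letting f : {0,1}^n → {0,1} be the address function on n variables, there is a cost vector c' ∈ ℝ^n with all entries positive (namely cost 1/d on each of the d address bits and cost 1 on each of the 2^d dedicated bits) such that under the uniform distribution OPT_N(f, c') ≥ c · n · OPT_A(f, c'). -/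
open Finset

/-- The value of variable `j` of `x : Fin (2^d + d) → Bool` (false for out-of-range `j`).
Variables `0, …, d-1` are the address bits and variables `d, …, d + 2^d - 1` are the
dedicated bits. -/
def xAt (d : ℕ) (x : Fin (2 ^ d + d) → Bool) (j : ℕ) : Bool :=
  if h : j < 2 ^ d + d then x ⟨j, h⟩ else false

/-- The address encoded in binary by the `d` address bits of `x`. -/
def addrVal (d : ℕ) (x : Fin (2 ^ d + d) → Bool) : ℕ :=
  ∑ j ∈ Finset.range d, if xAt d x j then 2 ^ j else 0

/-- The address function on `n = 2^d + d` variables: it returns the dedicated bit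
indexed by the address encoded by the `d` address bits. -/
def addressFn (d : ℕ) (x : Fin (2 ^ d + d) → Bool) : Bool :=
  xAt d x (d + addrVal d x)

/-! Every strategy must read the dedicated bit at the input's address: flipping it flips `f`
without changing the address. A non-adaptive order fixes when each of the `2^d` dedicated bits
is read, so on inputs with address `a` it pays at least the rank of `y_a` among them; the
address is uniform, so these ranks average to `(2^d + 1)/2 ≥ n/4`. Adaptively, reading the `d`
address bits (total cost `1`) and then the addressed dedicated bit costs `2`. Hence `c = 1/8`. -/

section Uniform

variable {n : ℕ}

lemma prodWeight_half (x : Fin n → Bool) : prodWeight n (fun _ => 1 / 2) x = 1 / 2 ^ n := by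
  norm_num [prodWeight]

lemma sum_prodWeight_half_mul (g : (Fin n → Bool) → ℝ) :
    ∑ x, prodWeight n (fun _ => 1 / 2) x * g x = (∑ x, g x) / 2 ^ n := by
  rw [sum_div]
  exact sum_congr rfl fun x _ => by rw [prodWeight_half]; ring

end Uniform

section Strategies

variable {n : ℕ} {f : (Fin n → Bool) → Bool} {c p : Fin n → ℝ}

lemma prodWeight_nonneg (hp₀ : ∀ i, 0 ≤ p i) (hp₁ : ∀ i, p i ≤ 1) (x : Fin n → Bool) :
    0 ≤ prodWeight n p x :=
  prod_nonneg fun i _ => by split <;> linarith [hp₀ i, hp₁ i]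

lemma DecTree.costOn_nonneg (hc : ∀ i, 0 ≤ c i) (t : DecTree n) (x : Fin n → Bool) :
    0 ≤ t.costOn c x := by
  induction t with
  | leaf => exact le_rfl
  | node i t₀ t₁ ih₀ ih₁ =>
    simp only [DecTree.costOn]
    split <;> linarith [hc i]

lemma OPTA_le_adExpCost (hc : ∀ i, 0 ≤ c i) (hp₀ : ∀ i, 0 ≤ p i) (hp₁ : ∀ i, p i ≤ 1)
    {t : DecTree n} (ht : t.Computes f) : OPTA n f c p ≤ adExpCost n c p t := by
  refine csInf_le ⟨0, ?_⟩ ⟨t, ht, rfl⟩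
  rintro r ⟨t', -, rfl⟩
  exact sum_nonneg fun x _ =>
    mul_nonneg (prodWeight_nonneg hp₀ hp₁ x) (t'.costOn_nonneg hc x)

lemma le_OPTN {B : ℝ} (h : ∀ π, B ≤ naExpCost n f c p π) : B ≤ OPTN n f c p :=
  le_csInf ⟨_, Equiv.refl _, rfl⟩ (by rintro r ⟨π, rfl⟩; exact h π)

lemma determines_prefixSet_naSteps (π : Equiv.Perm (Fin n)) (x : Fin n → Bool) :
    Determines n f (prefixSet n π (naSteps n f π x)) x :=
  Nat.sInf_mem (s := {k | Determines n f (prefixSet n π k) x}) ⟨n, fun x' hx' => by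
    rw [funext fun i => hx' i (by simp [prefixSet])]⟩

lemma Determines.mem_of_update_ne {T : Finset (Fin n)} {x : Fin n → Bool} {i : Fin n}
    (hT : Determines n f T x) (hi : f (Function.update x i (!x i)) ≠ f x) : i ∈ T := by
  by_contra h
  exact hi (hT _ fun j hj => Function.update_of_ne (ne_of_mem_of_not_mem hj h) _ _)

end Strategies

lemma card_sq_add_card_le_two_mul_sum_card_le {α β : Type*} [Fintype α] [LinearOrder β]
    {q : α → β} (hq : Function.Injective q) :
    Fintype.card α ^ 2 + Fintype.card α ≤ 2 * ∑ a, #{b | q b ≤ q a} := by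
  classical
  have hpair : ∀ a b, 1 + (if a = b then 1 else 0)
      ≤ (if q b ≤ q a then 1 else 0) + (if q a ≤ q b then 1 else 0) := by
    intro a b
    by_cases hab : a = b
    · simp [hab]
    · rcases lt_or_gt_of_ne (hq.ne hab) with h | h <;> simp [hab, h.le, h.not_ge]
  calc Fintype.card α ^ 2 + Fintype.card α = ∑ a, ∑ b, (1 + if a = b then 1 else 0) := by
        simp only [sum_add_distrib, sum_const, card_univ, smul_eq_mul, mul_one, sum_ite_eq,
          mem_univ, if_true]
        ring
    _ ≤ ∑ a, ∑ b, ((if q b ≤ q a then 1 else 0) + (if q a ≤ q b then 1 else 0)) :=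
        sum_le_sum fun a _ => sum_le_sum fun b _ => hpair a b
    _ = 2 * ∑ a, #{b | q b ≤ q a} := by
        rw [sum_congr rfl fun a _ => sum_add_distrib, sum_add_distrib,
          sum_comm (f := fun a b => if q a ≤ q b then 1 else 0)]
        simp only [card_filter, two_mul]

namespace AddressFunction

variable (d : ℕ)

def dedBit (a : Fin (2 ^ d)) : Fin (2 ^ d + d) := ⟨d + a, by omega⟩

lemma dedBit_injective : Function.Injective (dedBit d) :=
  fun a b h => Fin.ext (by simpa [dedBit] using congrArg Fin.val h)

/-- Splits an input into its address bits and its dedicated bits. -/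
def splitBits : (Fin (2 ^ d + d) → Bool) ≃ (Fin d → Bool) × (Fin (2 ^ d) → Bool) :=
  (((finCongr (add_comm _ _)).trans finSumFinEquiv.symm).arrowCongr (Equiv.refl Bool)).trans
    (Equiv.sumArrowEquivProdArrow _ _ _)

lemma splitBits_fst_apply (x : Fin (2 ^ d + d) → Bool) (j : Fin d) :
    (splitBits d x).1 j = x ⟨j, j.2.trans_le (Nat.le_add_left _ _)⟩ := rfl

def bitsEquiv : (Fin d → Bool) ≃ Fin (2 ^ d) :=
  (Equiv.arrowCongr (Equiv.refl _) finTwoEquiv.symm).trans finFunctionFinEquiv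

lemma bitsEquiv_val (u : Fin d → Bool) :
    (bitsEquiv d u : ℕ) = ∑ j : Fin d, if u j then 2 ^ (j : ℕ) else 0 := by
  rw [bitsEquiv, Equiv.trans_apply, finFunctionFinEquiv_apply]
  refine sum_congr rfl fun j _ => ?_
  cases h : u j <;> simp [h] <;> rfl

def addr (x : Fin (2 ^ d + d) → Bool) : Fin (2 ^ d) := bitsEquiv d (splitBits d x).1

lemma addr_val (x : Fin (2 ^ d + d) → Bool) : (addr d x : ℕ) = addrVal d x := by
  rw [addr, bitsEquiv_val, addrVal, ← Fin.sum_univ_eq_sum_range]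
  refine sum_congr rfl fun j _ => ?_
  rw [splitBits_fst_apply, xAt, dif_pos (j.2.trans_le (Nat.le_add_left _ _))]

lemma addressFn_eq (x : Fin (2 ^ d + d) → Bool) : addressFn d x = x (dedBit d (addr d x)) := by
  rw [addressFn, xAt, dif_pos (by have := (addr d x).isLt; rw [addr_val] at this; omega)]
  simp [dedBit, addr_val]

lemma sum_comp_addr {M : Type*} [AddCommMonoid M] (g : Fin (2 ^ d) → M) :
    ∑ x, g (addr d x) = 2 ^ 2 ^ d • ∑ a, g a := by
  rw [Fintype.sum_equiv (splitBits d) (fun x => g (addr d x)) (fun uv => g (bitsEquiv d uv.1))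
    fun _ => rfl, Fintype.sum_prod_type]
  simp only [sum_const, card_univ, Fintype.card_fun, Fintype.card_bool, Fintype.card_fin]
  rw [← smul_sum, Equiv.sum_comp (bitsEquiv d) g]

lemma addr_update_dedBit (x : Fin (2 ^ d + d) → Bool) (a : Fin (2 ^ d)) (b : Bool) :
    addr d (Function.update x (dedBit d a) b) = addr d x := by
  simp only [addr]
  congr 1
  funext j
  rw [splitBits_fst_apply, splitBits_fst_apply, Function.update_of_ne]
  simp only [ne_eq, dedBit, Fin.ext_iff]
  omega

lemma dedBit_addr_mem_of_determines {T : Finset (Fin (2 ^ d + d))} {x : Fin (2 ^ d + d) → Bool}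
    (hT : Determines _ (addressFn d) T x) : dedBit d (addr d x) ∈ T :=
  hT.mem_of_update_ne (by
    rw [addressFn_eq, addr_update_dedBit, Function.update_self, addressFn_eq]
    simp)

noncomputable def cost : Fin (2 ^ d + d) → ℝ := fun i => if (i : ℕ) < d then 1 / (d : ℝ) else 1

lemma cost_pos (i : Fin (2 ^ d + d)) : 0 < cost d i := by
  unfold cost
  split_ifs with h
  · have : (0 : ℝ) < d := by exact_mod_cast Nat.zero_lt_of_lt h
    positivity
  · exact one_pos

lemma cost_dedBit (a : Fin (2 ^ d)) : cost d (dedBit d a) = 1 :=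
  if_neg (by simp [dedBit])

lemma card_le_naCost (π : Equiv.Perm (Fin (2 ^ d + d))) (x : Fin (2 ^ d + d) → Bool) :
    (#{b | π.symm (dedBit d b) ≤ π.symm (dedBit d (addr d x))} : ℝ)
      ≤ naCost _ (addressFn d) (cost d) π x := by
  have hmem := dedBit_addr_mem_of_determines d (determines_prefixSet_naSteps π x)
  have hsub : image (dedBit d) {b | π.symm (dedBit d b) ≤ π.symm (dedBit d (addr d x))}
      ⊆ prefixSet _ π (naSteps _ (addressFn d) π x) := by
    intro i hi
    obtain ⟨b, hb, rfl⟩ := mem_image.1 hi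
    simp only [prefixSet, mem_filter, mem_univ, true_and] at hmem hb ⊢
    exact (Fin.le_def.1 hb).trans_lt hmem
  calc (#{b | π.symm (dedBit d b) ≤ π.symm (dedBit d (addr d x))} : ℝ)
      = ∑ i ∈ image (dedBit d) {b | π.symm (dedBit d b) ≤ π.symm (dedBit d (addr d x))},
          cost d i := by
        simp [sum_image fun a _ b _ h => dedBit_injective d h, cost_dedBit]
    _ ≤ naCost _ (addressFn d) (cost d) π x :=
        sum_le_sum_of_subset_of_nonneg hsub fun i _ _ => (cost_pos d i).le

lemma le_naExpCost (π : Equiv.Perm (Fin (2 ^ d + d))) :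
    ((2 : ℝ) ^ d + 1) / 2 ≤ naExpCost _ (addressFn d) (cost d) (fun _ => 1 / 2) π := by
  set R : Fin (2 ^ d) → ℕ := fun a => #{b | π.symm (dedBit d b) ≤ π.symm (dedBit d a)}
  have hrank : ((2 : ℝ) ^ d) ^ 2 + 2 ^ d ≤ 2 * ∑ a, (R a : ℝ) := by
    have := card_sq_add_card_le_two_mul_sum_card_le (π.symm.injective.comp (dedBit_injective d))
    rw [Fintype.card_fin] at this
    exact_mod_cast this
  have hsum : 2 ^ 2 ^ d * ∑ a, (R a : ℝ) ≤ ∑ x, naCost _ (addressFn d) (cost d) π x :=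
    calc 2 ^ 2 ^ d * ∑ a, (R a : ℝ) = ∑ x, (R (addr d x) : ℝ) := by
          rw [sum_comp_addr d (fun a => (R a : ℝ)), nsmul_eq_mul]
          push_cast
          rfl
      _ ≤ ∑ x, naCost _ (addressFn d) (cost d) π x :=
          sum_le_sum fun x _ => card_le_naCost d π x
  rw [naExpCost, sum_prodWeight_half_mul, le_div_iff₀ (by positivity)]
  calc ((2 : ℝ) ^ d + 1) / 2 * 2 ^ (2 ^ d + d) = 2 ^ 2 ^ d * (((2 : ℝ) ^ d) ^ 2 + 2 ^ d) / 2 := by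
        rw [pow_add]
        ring
    _ ≤ 2 ^ 2 ^ d * ∑ a, (R a : ℝ) := by nlinarith [pow_pos (two_pos (α := ℝ)) (2 ^ d)]
    _ ≤ _ := hsum

/-- `addrTree d m acc` reads the address bits `m - 1, …, 0`, adding `2 ^ j` to `acc` for each
set bit `j`, and then reads the dedicated bit at the accumulated address. The `else` branches
are never taken from `addrTree d d 0`. -/
def addrTree : ℕ → ℕ → DecTree (2 ^ d + d)
  | 0, acc =>
    if h : d + acc < 2 ^ d + d then .node ⟨d + acc, h⟩ (.leaf false) (.leaf true) else .leaf false
  | m + 1, acc =>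
    if h : m < 2 ^ d + d then .node ⟨m, h⟩ (addrTree m acc) (addrTree m (acc + 2 ^ m))
    else .leaf false

lemma addrTree_eval (x : Fin (2 ^ d + d) → Bool) : ∀ m acc, m ≤ d →
    (addrTree d m acc).eval x = xAt d x (d + acc + ∑ j ∈ range m, if xAt d x j then 2 ^ j else 0)
  | 0, acc, _ => by
    simp only [addrTree, range_zero, sum_empty, add_zero]
    split_ifs with h
    · simp only [DecTree.eval, xAt, dif_pos h]
      cases x ⟨d + acc, h⟩ <;> rfl
    · simp [DecTree.eval, xAt, dif_neg h]
  | m + 1, acc, hm => by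
    have h : m < 2 ^ d + d := (by omega : m < d).trans_le (Nat.le_add_left _ _)
    have hx : xAt d x m = x ⟨m, h⟩ := dif_pos h
    simp only [addrTree, dif_pos h, DecTree.eval, sum_range_succ, hx]
    cases x ⟨m, h⟩
    · simp [addrTree_eval x m acc (by omega)]
    · simp only [addrTree_eval x m _ (by omega), if_true]
      ring_nf

lemma addrTree_computes : (addrTree d d 0).Computes (addressFn d) := fun x => by
  rw [addrTree_eval d x d 0 le_rfl, add_zero]
  rfl

lemma addrTree_costOn_le (x : Fin (2 ^ d + d) → Bool) : ∀ m acc, m ≤ d →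
    (addrTree d m acc).costOn (cost d) x ≤ m / d + 1
  | 0, acc, _ => by
    simp only [addrTree]
    split_ifs with h
    · simp [DecTree.costOn, cost]
    · simp [DecTree.costOn]
  | m + 1, acc, hm => by
    have h : m < 2 ^ d + d := (by omega : m < d).trans_le (Nat.le_add_left _ _)
    have hc : cost d ⟨m, h⟩ = 1 / d := if_pos (show m < d by omega)
    have h₀ := addrTree_costOn_le x m acc (by omega)
    have h₁ := addrTree_costOn_le x m (acc + 2 ^ m) (by omega)
    simp only [addrTree, dif_pos h, DecTree.costOn, hc]
    push_cast
    rw [add_div]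
    split <;> linarith

lemma adExpCost_addrTree_le : adExpCost _ (cost d) (fun _ => 1 / 2) (addrTree d d 0) ≤ 2 := by
  rw [adExpCost, sum_prodWeight_half_mul, div_le_iff₀ (by positivity)]
  calc ∑ x, (addrTree d d 0).costOn (cost d) x ≤ ∑ _x : Fin (2 ^ d + d) → Bool, (2 : ℝ) :=
        sum_le_sum fun x _ =>
          (addrTree_costOn_le d x d 0 le_rfl).trans (by linarith [div_self_le_one (d : ℝ)])
    _ = 2 * 2 ^ (2 ^ d + d) := by simp [mul_comm]

lemma OPTA_le_two : OPTA _ (addressFn d) (cost d) (fun _ => 1 / 2) ≤ 2 :=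
  (OPTA_le_adExpCost (fun i => (cost_pos d i).le) (by norm_num) (by norm_num)
    (addrTree_computes d)).trans (adExpCost_addrTree_le d)

theorem one_div_eight_mul_OPTA_le_OPTN :
    1 / 8 * ((2 ^ d + d : ℕ) : ℝ) * OPTA _ (addressFn d) (cost d) (fun _ => 1 / 2)
      ≤ OPTN _ (addressFn d) (cost d) (fun _ => 1 / 2) := by
  have hd : (d : ℝ) ≤ 2 ^ d := by exact_mod_cast Nat.lt_two_pow_self.le
  calc 1 / 8 * ((2 ^ d + d : ℕ) : ℝ) * OPTA _ (addressFn d) (cost d) (fun _ => 1 / 2)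
      ≤ 1 / 8 * ((2 ^ d + d : ℕ) : ℝ) * 2 := by gcongr; exact OPTA_le_two d
    _ ≤ ((2 : ℝ) ^ d + 1) / 2 := by push_cast; linarith
    _ ≤ OPTN _ (addressFn d) (cost d) (fun _ => 1 / 2) := le_OPTN (le_naExpCost d)

end AddressFunction

/-- There is a constant `c > 0` such that for every `d ≥ 2`, with `n = 2^d + d` and `f`
the address function on `n` variables, there is a positive cost vector — namely cost
`1/d` on each of the `d` address bits and cost `1` on each of the `2^d` dedicated bits —
such that under the uniform distribution `OPT_N(f, c') ≥ c·n·OPT_A(f, c')`. -/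
theorem stmt14 :
    ∃ c : ℝ, 0 < c ∧
      ∀ d : ℕ, 2 ≤ d →
        ∃ c' : Fin (2 ^ d + d) → ℝ,
          (∀ i, 0 < c' i) ∧
          (∀ i : Fin (2 ^ d + d), c' i = if (i : ℕ) < d then 1 / (d : ℝ) else 1) ∧
          c * ((2 ^ d + d : ℕ) : ℝ) *
              OPTA (2 ^ d + d) (addressFn d) c' (fun _ => 1/2) ≤
            OPTN (2 ^ d + d) (addressFn d) c' (fun _ => 1/2) :=
  ⟨1 / 8, by norm_num, fun d _ => ⟨AddressFunction.cost d, AddressFunction.cost_pos d,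
    fun _ => rfl, AddressFunction.one_div_eight_mul_OPTA_le_OPTN d⟩⟩
end
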